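/- Let G = (V,E) be a game graph with weight function w bounded by W, and let π be a finite-memory Player-0 strategy with memory set M that is winning in the mean-payoff game (G, MP(w)) (i.e., winning from every node of Win(G, MP(w))). Then there exists a bound b ∈ ℕ such that every π-play ρ starting from a node v ∈ Win(G, MP(w)) satisfies w(ρ[0;i]) ≥ −b for all i ∈ ℕ; in fact b = 2·|V|·|M|·W suffices. -/
import Mathlib


open scoped Classical

noncomputable section

namespace QaSTelPaper

variable {V : Type*}

/-- Prefix weight `w(ρ[0;i])` of a play. -/
def prefW (w : V × V → ℤ) (ρ : ℕ → V) (i : ℕ) : ℤ :=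
  ∑ j ∈ Finset.range i, w (ρ j, ρ (j + 1))

/-- A play on the edge set `E`. -/
def IsPlay (E : Set (V × V)) (ρ : ℕ → V) : Prop :=
  ∀ i, (ρ i, ρ (i + 1)) ∈ E

/-- A Player-0 strategy assigns to each history and current Player-0 node a successor
that forms an edge. -/
def IsStrategy (V0 : Set V) (E : Set (V × V)) (π : List V → V → V) : Prop :=
  ∀ H v, v ∈ V0 → (v, π H v) ∈ E

/-- History of the play `ρ` strictly before index `i`. -/
def hist (ρ : ℕ → V) (i : ℕ) : List V :=
  List.ofFn fun j : Fin i => ρ j.1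

/-- `ρ` is a `π`-play. -/
def FollowsStrat (V0 : Set V) (π : List V → V → V) (ρ : ℕ → V) : Prop :=
  ∀ i, ρ i ∈ V0 → ρ (i + 1) = π (hist ρ i) (ρ i)

/-- The energy objective `En_c(w)`. -/
def En (w : V × V → ℤ) (c : ℕ) : Set (ℕ → V) :=
  {ρ | ∀ i, 0 ≤ (c : ℤ) + prefW w ρ i}

/-- The mean-payoff objective `MP(w)`. -/
def MP (w : V × V → ℤ) : Set (ℕ → V) :=
  {ρ | 0 ≤ Filter.limsup (fun n : ℕ => ((prefW w ρ n : ℝ) / (n : ℝ) : EReal)) Filter.atTop}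

/-- `π` is winning from `v` for objective `φ`. -/
def WinningFrom (V0 : Set V) (E : Set (V × V)) (π : List V → V → V)
    (φ : Set (ℕ → V)) (v : V) : Prop :=
  ∀ ρ, IsPlay E ρ → FollowsStrat V0 π ρ → ρ 0 = v → ρ ∈ φ

/-- The winning region of Player 0 for objective `φ`. -/
def Win (V0 : Set V) (E : Set (V × V)) (φ : Set (ℕ → V)) : Set V :=
  {v | ∃ π, IsStrategy V0 E π ∧ WinningFrom V0 E π φ v}

/-- A quantitative strategy template (QaSTel): monotone assignment of sets of activated
outgoing edges. -/
def IsQaSTel (E : Set (V × V)) (Temp : V → ℕ∞ → Set (V × V)) : Prop :=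
  (∀ u c e, e ∈ Temp u c → e ∈ E ∧ e.1 = u) ∧
  ∀ u c c', c ≤ c' → Temp u c ⊆ Temp u c'

/-- Activation value `act_Π(e)`: the least `k` such that `e ∈ Π(e.1, c)` for all `c ≥ k`. -/
def act (Temp : V → ℕ∞ → Set (V × V)) (e : V × V) : ℕ∞ :=
  sInf {k : ℕ∞ | ∀ c, k ≤ c → e ∈ Temp e.1 c}

/-- A QaSTel extended to integer credits: empty for negative credits. -/
def tmplZ (Temp : V → ℕ∞ → Set (V × V)) (u : V) (z : ℤ) : Set (V × V) :=
  if 0 ≤ z then Temp u (z.toNat : ℕ∞) else ∅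

/-- `ρ` is a `(Π, c)`-play. -/
def TemplatePlay (V0 : Set V) (w : V × V → ℤ) (Temp : V → ℕ∞ → Set (V × V))
    (c : ℕ) (ρ : ℕ → V) : Prop :=
  (∀ i, ρ i ∈ V0 → (ρ i, ρ (i + 1)) ∈ tmplZ Temp (ρ i) ((c : ℤ) + prefW w ρ i)) ∨
  ∃ k : ℕ,
    (∀ i ≤ k, ρ i ∈ V0 → (ρ i, ρ (i + 1)) ∈ tmplZ Temp (ρ i) ((c : ℤ) + prefW w ρ i)) ∧
    ρ (k + 1) ∈ V0 ∧ tmplZ Temp (ρ (k + 1)) ((c : ℤ) + prefW w ρ (k + 1)) = ∅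

/-- `π ⊨_c Π`: every `π`-play is a `(Π, c)`-play. -/
def FollowsTemplate (V0 : Set V) (E : Set (V × V)) (w : V × V → ℤ)
    (π : List V → V → V) (Temp : V → ℕ∞ → Set (V × V)) (c : ℕ) : Prop :=
  ∀ ρ, IsPlay E ρ → FollowsStrat V0 π ρ → TemplatePlay V0 w Temp c ρ

/-- Shift a play by one step. -/
def shift (ρ : ℕ → V) : ℕ → V := fun i => ρ (i + 1)

/-- The edge-optimal value `optE(e)`: the least `m` such that for every initial credit
`c ≥ m` there is a Player-0 strategy `π` with `plays_π(G,e) ⊆ En_c(w)`. -/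
def optE (V0 : Set V) (E : Set (V × V)) (w : V × V → ℤ) (e : V × V) : ℕ∞ :=
  sInf {m : ℕ∞ | ∀ c : ℕ, m ≤ (c : ℕ∞) →
    ∃ π, IsStrategy V0 E π ∧
      ∀ ρ, IsPlay E ρ → (ρ 0, ρ 1) = e → FollowsStrat V0 π (shift ρ) → ρ ∈ En w c}

/-- The node-optimal value `opt(v)`. -/
def optV (V0 : Set V) (E : Set (V × V)) (w : V × V → ℤ) (v : V) : ℕ∞ :=
  sInf {m : ℕ∞ | ∀ c : ℕ, m ≤ (c : ℕ∞) →
    ∃ π, IsStrategy V0 E π ∧ WinningFrom V0 E π (En w c) v}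

/-- Truncated subtraction `l ⊖ a` of an integer from an extended natural. -/
def osub (l : ℕ∞) (a : ℤ) : ℕ∞ :=
  if l = ⊤ then ⊤ else (((l.toNat : ℤ) - a).toNat : ℕ∞)

/-- The edge-based value-iteration operator `O_E`. -/
def OE (V0 : Set V) (E : Set (V × V)) (w : V × V → ℤ)
    (μ : V × V → ℕ∞) (e : V × V) : ℕ∞ :=
  if e.2 ∈ V0 then
    sInf {x : ℕ∞ | ∃ e' ∈ E, e'.1 = e.2 ∧ x = osub (μ e') (w e)}
  else
    sSup {x : ℕ∞ | ∃ e' ∈ E, e'.1 = e.2 ∧ x = osub (μ e') (w e)}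

/-- The optimal QaSTel `Temp(u,k) = {e ∈ E(u) : optE(e) ≤ k}`. -/
def optTmpl (V0 : Set V) (E : Set (V × V)) (w : V × V → ℤ) :
    V → ℕ∞ → Set (V × V) :=
  fun u k => {e | e ∈ E ∧ e.1 = u ∧ optE V0 E w e ≤ k}

/-- Canonical extension of the memory-update function to histories. -/
def updMem {M : Type*} (α : M × V → M) (m0 : M) (H : List V) : M :=
  H.foldl (fun m v => α (m, v)) m0

/-- The strategy induced by a finite-memory machine `(M, m0, α, β)`. -/
def memStrat {M : Type*} (α : M × V → M) (β : M × V → V) (m0 : M) :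
    List V → V → V :=
  fun H v => β (updMem α m0 H, v)

/-! ### Auxiliary lemmas for Statement 11 -/

section Aux

lemma prefW_succ (w : V × V → ℤ) (ρ : ℕ → V) (i : ℕ) :
    prefW w ρ (i + 1) = prefW w ρ i + w (ρ i, ρ (i + 1)) :=
  Finset.sum_range_succ _ _

lemma hist_succ_concat (ρ : ℕ → V) (i : ℕ) :
    hist ρ (i + 1) = (hist ρ i).concat (ρ i) := by
  unfold hist
  rw [List.ofFn_succ']
  simp

lemma hist_congr {ρ ρ' : ℕ → V} {i : ℕ} (h : ∀ m < i, ρ m = ρ' m) :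
    hist ρ i = hist ρ' i := by
  unfold hist
  congr 1
  funext j
  exact h j.1 j.2

lemma prefW_congr (w : V × V → ℤ) {ρ ρ' : ℕ → V} {i : ℕ}
    (h : ∀ m ≤ i, ρ m = ρ' m) : prefW w ρ i = prefW w ρ' i := by
  unfold prefW
  refine Finset.sum_congr rfl fun m hm => ?_
  rw [Finset.mem_range] at hm
  rw [h m (by omega), h (m + 1) (by omega)]

lemma updMem_hist_succ {M : Type*} (α : M × V → M) (m0 : M) (ρ : ℕ → V) (i : ℕ) :
    updMem α m0 (hist ρ (i + 1)) = α (updMem α m0 (hist ρ i), ρ i) := by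
  rw [hist_succ_concat]
  simp [updMem, List.concat_eq_append, List.foldl_append]

lemma prefW_step_bound {E : Set (V × V)} {w : V × V → ℤ} {W : ℕ}
    (hw : ∀ e ∈ E, |w e| ≤ (W : ℤ)) {ρ : ℕ → V} (hplay : IsPlay E ρ)
    (a r : ℕ) : prefW w ρ (a + r) ≤ prefW w ρ a + (r : ℤ) * (W : ℤ) := by
  induction r with
  | zero => simp
  | succ r ih =>
      have h := (abs_le.mp (hw _ (hplay (a + r)))).2
      have e : a + (r + 1) = (a + r) + 1 := by ring
      rw [e, prefW_succ]
      push_cast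
      push_cast at ih
      linarith

/-- Pigeonhole on record minima: if a `W`-Lipschitz-below sequence starting at `0`
dips below `-(n·W)` with `n` at least the number of states, then some state repeats
with strictly smaller value at the later visit. -/
lemma exists_record_repeat {σ : Type*} [Fintype σ] (f : ℕ → ℤ) (S : ℕ → σ)
    (W n : ℕ) (hn : Fintype.card σ ≤ n)
    (h0 : f 0 = 0) (hstep : ∀ t, f t - (W : ℤ) ≤ f (t + 1))
    (i : ℕ) (hi : f i < -((n : ℤ) * (W : ℤ))) :
    ∃ j k, j < k ∧ S j = S k ∧ f k < f j := by
  have hex : ∀ q : Fin (n + 1), ∃ t, f t < -((q.1 : ℤ) * (W : ℤ)) := by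
    intro q
    refine ⟨i, lt_of_lt_of_le hi ?_⟩
    have hq : (q.1 : ℤ) ≤ (n : ℤ) := by exact_mod_cast Nat.lt_succ_iff.mp q.2
    have := mul_le_mul_of_nonneg_right hq (show (0:ℤ) ≤ (W:ℤ) by positivity)
    linarith
  let T : Fin (n + 1) → ℕ := fun q => Nat.find (hex q)
  have hspec : ∀ q, f (T q) < -((q.1 : ℤ) * (W : ℤ)) := fun q => Nat.find_spec (hex q)
  have hlow : ∀ q : Fin (n + 1), -((q.1 : ℤ) * (W : ℤ)) - (W : ℤ) ≤ f (T q) := by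
    intro q
    rcases Nat.eq_zero_or_pos (T q) with h | h
    · rw [h, h0]
      have : (0:ℤ) ≤ (q.1 : ℤ) * (W : ℤ) := by positivity
      have : (0:ℤ) ≤ (W : ℤ) := by positivity
      linarith
    · obtain ⟨s, hs⟩ : ∃ s, T q = s + 1 := ⟨T q - 1, by omega⟩
      have hlt : s < T q := by omega
      have h1 : ¬ f s < -((q.1 : ℤ) * (W : ℤ)) := Nat.find_min (hex q) hlt
      have h2 := hstep s
      push_neg at h1
      rw [hs]
      linarith
  have hmono : ∀ a b : Fin (n + 1), a.1 ≤ b.1 → T a ≤ T b := by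
    intro a b hab
    apply Nat.find_min'
    have h2 := hspec b
    have hle : (a.1 : ℤ) * (W : ℤ) ≤ (b.1 : ℤ) * (W : ℤ) :=
      mul_le_mul_of_nonneg_right (by exact_mod_cast hab) (by positivity)
    linarith
  have key : ∀ a b : Fin (n + 1), a.1 < b.1 → T a < T b ∧ f (T b) < f (T a) := by
    intro a b hab
    have h1 : f (T b) < f (T a) := by
      have h2 := hspec b
      have h3 := hlow a
      have h4 : ((a.1 : ℤ) + 1) * (W : ℤ) ≤ (b.1 : ℤ) * (W : ℤ) := by
        have : ((a.1 : ℤ) + 1) ≤ (b.1 : ℤ) := by exact_mod_cast hab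
        exact mul_le_mul_of_nonneg_right this (by positivity)
      nlinarith
    refine ⟨lt_of_le_of_ne (hmono a b hab.le) fun hEq => ?_, h1⟩
    rw [hEq] at h1
    exact lt_irrefl _ h1
  obtain ⟨a, b, hne, hSeq⟩ := Fintype.exists_ne_map_eq_of_card_lt
      (fun q : Fin (n + 1) => S (T q)) (by simpa using Nat.lt_succ_of_le hn)
  have hvne : a.1 ≠ b.1 := fun h => hne (Fin.val_injective h)
  rcases lt_or_gt_of_ne hvne with h | h
  · obtain ⟨hlt, hf⟩ := key a b h
    exact ⟨T a, T b, hlt, hSeq, hf⟩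
  · obtain ⟨hlt, hf⟩ := key b a h
    exact ⟨T b, T a, hlt, hSeq.symm, hf⟩

/-- Pumping a repeated product state with a strictly negative intermediate weight
contradicts winning the mean-payoff objective. -/
lemma pump {M : Type*} (V0 : Set V) (E : Set (V × V)) (w : V × V → ℤ) (W : ℕ)
    (hw : ∀ e ∈ E, |w e| ≤ (W : ℤ))
    (m0 : M) (α : M × V → M) (β : M × V → V)
    (ρ : ℕ → V) (hplay : IsPlay E ρ)
    (hfol : FollowsStrat V0 (memStrat α β m0) ρ)
    (hMP : ∀ ρ', IsPlay E ρ' → FollowsStrat V0 (memStrat α β m0) ρ' → ρ' 0 = ρ 0 →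
      ρ' ∈ MP w)
    (j k : ℕ) (hjk : j < k)
    (hmem : updMem α m0 (hist ρ j) = updMem α m0 (hist ρ k))
    (hnode : ρ j = ρ k)
    (hneg : prefW w ρ k < prefW w ρ j) : False := by
  set L : ℕ := k - j with hLdef
  have hL : 0 < L := by omega
  have hjL : j + L = k := by omega
  set c : ℤ := prefW w ρ k - prefW w ρ j with hcdef
  have hc : c ≤ -1 := by omega
  set ρ' : ℕ → V := fun m => if m < j then ρ m else ρ (j + (m - j) % L) with hρ'
  have low : ∀ m ≤ j, ρ' m = ρ m := by
    intro m hm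
    by_cases h : m < j
    · simp only [hρ', if_pos h]
    · have hmj : m = j := by omega
      simp only [hρ', if_neg h, hmj, Nat.sub_self, Nat.zero_mod, Nat.add_zero, ite_self]
  have high : ∀ t, ρ' (j + t) = ρ (j + t % L) := by
    intro t
    have h1 : ¬ j + t < j := by omega
    have h2 : j + t - j = t := by omega
    simp only [hρ', if_neg h1, h2]
  have hmodsucc : ∀ t, ((t + 1) % L = t % L + 1 ∧ (t + 1) / L = t / L)
      ∨ (t % L + 1 = L ∧ (t + 1) % L = 0 ∧ (t + 1) / L = t / L + 1) := by
    intro t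
    have hm : t % L < L := Nat.mod_lt _ hL
    have hkey : (t % L + 1) % L = (t + 1) % L := Nat.mod_add_mod t L 1
    rcases lt_or_eq_of_le (Nat.succ_le_of_lt hm) with h | h
    · left
      have h2 : (t + 1) % L = t % L + 1 := by rw [← hkey, Nat.mod_eq_of_lt h]
      refine ⟨h2, ?_⟩
      have hnd : ¬ L ∣ t + 1 := by
        rw [Nat.dvd_iff_mod_eq_zero]
        omega
      rw [Nat.succ_div, if_neg hnd, Nat.add_zero]
    · right
      have h2 : (t + 1) % L = 0 := by
        rw [← hkey, show t % L + 1 = L from h, Nat.mod_self]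
      refine ⟨h, h2, ?_⟩
      have hd : L ∣ t + 1 := Nat.dvd_iff_mod_eq_zero.mpr h2
      rw [Nat.succ_div, if_pos hd]
  have histlow : hist ρ' j = hist ρ j := hist_congr fun m hm => low m hm.le
  have memEq : ∀ t, updMem α m0 (hist ρ' (j + t)) = updMem α m0 (hist ρ (j + t % L)) := by
    intro t
    induction t with
    | zero => simp [histlow]
    | succ t ih =>
        have e1 : j + (t + 1) = (j + t) + 1 := by omega
        rw [e1, updMem_hist_succ, ih, high t, ← updMem_hist_succ α m0 ρ (j + t % L)]
        rcases hmodsucc t with ⟨h2, _⟩ | ⟨h1, h2, _⟩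
        · rw [h2, ← add_assoc]
        · rw [h2, Nat.add_zero]
          have e2 : j + t % L + 1 = k := by rw [add_assoc, h1]; exact hjL
          rw [e2]
          exact hmem.symm
  have hplay' : IsPlay E ρ' := by
    intro i
    by_cases h : i + 1 ≤ j
    · rw [low i (by omega), low (i + 1) h]
      exact hplay i
    · obtain ⟨t, rfl⟩ : ∃ t, i = j + t := ⟨i - j, by omega⟩
      rw [high t, show j + t + 1 = j + (t + 1) by omega, high (t + 1)]
      rcases hmodsucc t with ⟨h2, _⟩ | ⟨h1, h2, _⟩
      · rw [h2, ← add_assoc]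
        exact hplay (j + t % L)
      · rw [h2, Nat.add_zero, hnode]
        have e2 : j + t % L + 1 = k := by rw [add_assoc, h1]; exact hjL
        have hp := hplay (j + t % L)
        rw [e2] at hp
        exact hp
  have hfol' : FollowsStrat V0 (memStrat α β m0) ρ' := by
    intro i hV0
    by_cases h : i < j
    · have e0 : ρ' i = ρ i := low i h.le
      have e1 : ρ' (i + 1) = ρ (i + 1) := low (i + 1) (by omega)
      have e2 : hist ρ' i = hist ρ i := hist_congr fun m hm => low m (by omega)
      rw [e0] at hV0
      rw [e1, e2, e0]
      exact hfol i hV0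
    · obtain ⟨t, rfl⟩ : ∃ t, i = j + t := ⟨i - j, by omega⟩
      have e0 : ρ' (j + t) = ρ (j + t % L) := high t
      rw [e0] at hV0
      have hstep := hfol (j + t % L) hV0
      have hm := memEq t
      rw [show j + t + 1 = j + (t + 1) by omega, high (t + 1)]
      simp only [memStrat] at hstep ⊢
      rw [e0, hm]
      rcases hmodsucc t with ⟨h2, _⟩ | ⟨h1, h2, _⟩
      · rw [h2, ← add_assoc]
        exact hstep
      · rw [h2, Nat.add_zero, hnode]
        have e2 : j + t % L + 1 = k := by rw [add_assoc, h1]; exact hjL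
        rw [e2] at hstep
        exact hstep
  have prefWlow : prefW w ρ' j = prefW w ρ j := prefW_congr w fun m hm => low m hm
  have formula : ∀ t, prefW w ρ' (j + t)
      = prefW w ρ j + ((t / L : ℕ) : ℤ) * c + (prefW w ρ (j + t % L) - prefW w ρ j) := by
    intro t
    induction t with
    | zero => simp [prefWlow]
    | succ t ih =>
        rw [show j + (t + 1) = (j + t) + 1 by omega, prefW_succ, ih, high t,
          show j + t + 1 = j + (t + 1) by omega, high (t + 1)]
        rcases hmodsucc t with ⟨h2, h3⟩ | ⟨h1, h2, h3⟩
        · rw [h2, h3, ← add_assoc]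
          have hps := prefW_succ w ρ (j + t % L)
          linarith
        · rw [h2, h3, Nat.add_zero]
          have e2 : j + t % L + 1 = k := by rw [add_assoc, h1]; exact hjL
          have hps := prefW_succ w ρ (j + t % L)
          rw [e2] at hps
          rw [hnode]
          push_cast
          linarith
  set K : ℤ := prefW w ρ j + (L : ℤ) * (W : ℤ) with hK
  have hbound : ∀ t, prefW w ρ' (j + t) ≤ K - ((t / L : ℕ) : ℤ) := by
    intro t
    have h1 := formula t
    have h2 : prefW w ρ (j + t % L) ≤ prefW w ρ j + ((t % L : ℕ) : ℤ) * (W : ℤ) :=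
      prefW_step_bound hw hplay j (t % L)
    have h3 : ((t % L : ℕ) : ℤ) * (W : ℤ) ≤ (L : ℤ) * (W : ℤ) := by
      have hlt : t % L < L := Nat.mod_lt _ hL
      exact mul_le_mul_of_nonneg_right (by exact_mod_cast hlt.le) (by positivity)
    have h5 : (0:ℤ) ≤ ((t / L : ℕ) : ℤ) := Int.ofNat_nonneg _
    have h4 : ((t / L : ℕ) : ℤ) * c ≤ -((t / L : ℕ) : ℤ) := by
      have := mul_le_mul_of_nonneg_left hc h5
      linarith
    linarith
  have hmp : ρ' ∈ MP w := hMP ρ' hplay' hfol' (low 0 (Nat.zero_le _))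
  simp only [MP, Set.mem_setOf_eq] at hmp
  have hLR : (0:ℝ) < (L : ℝ) := by exact_mod_cast hL
  have h2L : (0:ℝ) < 2 * (L : ℝ) := by linarith
  obtain ⟨r, hrdef⟩ : ∃ r : ℝ, r = (-1 : ℝ) / (2 * (L : ℝ)) := ⟨_, rfl⟩
  have hev : ∀ᶠ n : ℕ in Filter.atTop,
      ((prefW w ρ' n : ℝ) / (n : ℝ) : EReal) ≤ ((r : ℝ) : EReal) := by
    rw [Filter.eventually_atTop]
    refine ⟨j + 1 + (2 * (L : ℤ) * K + 2 * (L : ℤ) + 2 * (j : ℤ)).toNat, fun n hn => ?_⟩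
    obtain ⟨t, rfl⟩ : ∃ t, n = j + t := ⟨n - j, by omega⟩
    have hb := hbound t
    have hdm : L * (t / L) + t % L = t := Nat.div_add_mod t L
    have hdmz : (L : ℤ) * ((t / L : ℕ) : ℤ) + ((t % L : ℕ) : ℤ) = (t : ℤ) := by
      exact_mod_cast hdm
    have hmltz : ((t % L : ℕ) : ℤ) < (L : ℤ) := by exact_mod_cast Nat.mod_lt t hL
    have hnN : 2 * (L : ℤ) * K + 2 * (L : ℤ) + 2 * (j : ℤ) ≤ ((j + t : ℕ) : ℤ) := by
      have h1 := Int.self_le_toNat (2 * (L : ℤ) * K + 2 * (L : ℤ) + 2 * (j : ℤ))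
      have h2 : ((2 * (L : ℤ) * K + 2 * (L : ℤ) + 2 * (j : ℤ)).toNat : ℤ) ≤ ((j + t : ℕ) : ℤ) := by
        exact_mod_cast le_trans (Nat.le_add_left _ _) hn
      linarith
    have hn0 : (0:ℝ) < ((j + t : ℕ) : ℝ) := by
      have : 1 ≤ j + t := by omega
      exact_mod_cast Nat.lt_of_lt_of_le Nat.zero_lt_one this
    have hint : prefW w ρ' (j + t) * (2 * (L : ℤ)) ≤ -((j + t : ℕ) : ℤ) := by
      have hq2 : prefW w ρ' (j + t) * (2 * (L : ℤ))
          ≤ (K - ((t / L : ℕ) : ℤ)) * (2 * (L : ℤ)) := by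
        apply mul_le_mul_of_nonneg_right hb
        have : (0:ℤ) ≤ (L:ℤ) := by positivity
        linarith
      have hcast : ((j + t : ℕ) : ℤ) = (j : ℤ) + (t : ℤ) := by push_cast; ring
      nlinarith [hq2, hdmz, hmltz, hnN, hcast]
    rw [← EReal.coe_div, EReal.coe_le_coe_iff, hrdef, div_le_div_iff₀ hn0 h2L]
    have hr : (prefW w ρ' (j + t) : ℝ) * (2 * (L : ℝ)) ≤ -(((j + t : ℕ) : ℝ)) := by
      exact_mod_cast hint
    linarith
  have hls := Filter.limsup_le_of_le (by isBoundedDefault) hev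
  have h0 : (0 : EReal) ≤ ((r : ℝ) : EReal) := le_trans hmp hls
  rw [← EReal.coe_zero, EReal.coe_le_coe_iff] at h0
  have hneg' : (-1 : ℝ) / (2 * (L : ℝ)) < 0 := div_neg_of_neg_of_pos (by norm_num) h2L
  rw [hrdef] at h0
  linarith

end Aux

end QaSTelPaper

open QaSTelPaper in
/-- a finite-memory strategy winning the mean-payoff game keeps all prefix
weights of plays from the winning region above `-b` with `b = 2·|V|·|M|·W`. -/
theorem statement11 {V : Type*} {M : Type*} [Fintype V] [Fintype M]
    (V0 : Set V) (E : Set (V × V)) (hE : ∀ v : V, ∃ v', (v, v') ∈ E)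
    (w : V × V → ℤ) (W : ℕ) (hw : ∀ e ∈ E, |w e| ≤ (W : ℤ))
    (m0 : M) (α : M × V → M) (β : M × V → V)
    (hβ : ∀ m : M, ∀ v ∈ V0, (v, β (m, v)) ∈ E)
    (hwin : ∀ v ∈ Win V0 E (MP w),
      WinningFrom V0 E (memStrat α β m0) (MP w) v) :
    ∀ ρ : ℕ → V, IsPlay E ρ → FollowsStrat V0 (memStrat α β m0) ρ →
      ρ 0 ∈ Win V0 E (MP w) →
      ∀ i : ℕ, -((2 * Fintype.card V * Fintype.card M * W : ℕ) : ℤ) ≤ prefW w ρ i := by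
  intro ρ hplay hfol hwin0 i
  by_contra hcon
  push_neg at hcon
  have hwf := hwin (ρ 0) hwin0
  obtain ⟨j, k, hjk, hS, hneg⟩ :=
    exists_record_repeat (σ := M × V) (prefW w ρ)
      (fun t => (updMem α m0 (hist ρ t), ρ t)) W
      (2 * Fintype.card V * Fintype.card M)
      (by
        calc Fintype.card (M × V) = Fintype.card V * Fintype.card M := by
              rw [Fintype.card_prod, mul_comm]
          _ ≤ 2 * (Fintype.card V * Fintype.card M) :=
              Nat.le_mul_of_pos_left _ (by norm_num)
          _ = 2 * Fintype.card V * Fintype.card M := (mul_assoc _ _ _).symm)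
      rfl
      (fun t => by
        have h := (abs_le.mp (hw _ (hplay t))).1
        rw [prefW_succ]
        linarith)
      i
      (by push_cast at hcon ⊢; linarith)
  have hSm : updMem α m0 (hist ρ j) = updMem α m0 (hist ρ k) := congrArg Prod.fst hS
  have hSn : ρ j = ρ k := congrArg Prod.snd hS
  exact pump V0 E w W hw m0 α β ρ hplay hfol (fun ρ' a b cc => hwf ρ' a b cc)
    j k hjk hSm hSn hneg
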